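/- arXiv:0906.5405 — 5 statements merged into one kernel-verified Lean document; each statement's English description precedes it below -/
import Mathlib

section
/- Let ω > 0, let G be an m×m complex matrix, V an m×m diagonal complex matrix, and U^i ∈ ℂ^m a vector each of whose components has modulus 1. If ω²‖GV‖ < 1/2, then I − ω²GV is invertible and every component u_j of the vector U := (I − ω²GV)⁻¹U^i satisfies |u_j| ≥ b₀, where b₀ := (1 − 2ω²‖GV‖)/(1 − ω²‖GV‖); equivalently, the entrywise reciprocal vector U⁻¹ satisfies ‖U⁻¹‖_∞ ≤ (1 − ω²‖GV‖)/(1 − 2ω²‖GV‖). -/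
/-!
With `A = ω²GV` and `t = ‖A‖ < 1/2`, the Neumann series makes `1 - A` invertible, and
`U = Uⁱ + AU` gives `‖U‖_∞ ≤ 1/(1 - t)`. Reading the same identity componentwise,
`|u_j| ≥ |uⁱ_j| - t‖U‖_∞ ≥ 1 - t/(1 - t) = (1 - 2t)/(1 - t) > 0`.
-/

/-- The maximum-absolute-row-sum norm of a complex matrix (the operator norm
induced by the `ℓ∞` vector norm). -/
noncomputable def rowSumNorm {m : ℕ} (M : Matrix (Fin m) (Fin m) ℂ) : ℝ :=
  ⨆ i, ∑ j, ‖M i j‖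

/-- The `ℓ∞` norm of a complex vector. -/
noncomputable def supNorm {m : ℕ} (W : Fin m → ℂ) : ℝ :=
  ⨆ j, ‖W j‖

attribute [local instance] Matrix.linftyOpSeminormedAddCommGroup Matrix.linftyOpNormedRing
  Matrix.linftyOpNormedSpace

open Matrix

theorem rowSumNorm_eq_linfty_opNorm {m : ℕ} (M : Matrix (Fin m) (Fin m) ℂ) :
    rowSumNorm M = ‖M‖ := by
  simp [rowSumNorm, linfty_opNorm_def,
    Finset.sup_univ_eq_ciSup (fun i : Fin m => ∑ j, ‖M i j‖₊), NNReal.coe_iSup]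

theorem supNorm_inv_le {m : ℕ} {W : Fin m → ℂ} {b : ℝ} (hb : 0 < b) (hW : ∀ j, b ≤ ‖W j‖) :
    supNorm (fun j => (W j)⁻¹) ≤ b⁻¹ :=
  Real.iSup_le (fun j => by rw [norm_inv]; exact inv_anti₀ hb (hW j)) (inv_nonneg.2 hb.le)

namespace Matrix

section FixedPoint

variable {n α : Type*} [Fintype n] [NonUnitalSeminormedRing α] {A : Matrix n n α} {u w : n → α}

theorem norm_le_div_of_sub_mulVec_eq (hA : ‖A‖ < 1) (h : u - A *ᵥ u = w) :
    ‖u‖ ≤ ‖w‖ / (1 - ‖A‖) := by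
  have hu : ‖u‖ ≤ ‖w‖ + ‖A‖ * ‖u‖ :=
    calc ‖u‖ = ‖w + A *ᵥ u‖ := by rw [← h, sub_add_cancel]
      _ ≤ ‖w‖ + ‖A *ᵥ u‖ := norm_add_le _ _
      _ ≤ ‖w‖ + ‖A‖ * ‖u‖ := by gcongr; exact linfty_opNorm_mulVec A u
  rw [le_div_iff₀ (sub_pos.2 hA)]
  linarith

theorem norm_apply_sub_mul_le_of_sub_mulVec_eq (h : u - A *ᵥ u = w) (j : n) :
    ‖w j‖ - ‖A‖ * ‖u‖ ≤ ‖u j‖ := by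
  have hwj : ‖w j‖ ≤ ‖u j‖ + ‖A‖ * ‖u‖ :=
    calc ‖w j‖ = ‖u j - (A *ᵥ u) j‖ := by rw [← h, Pi.sub_apply]
      _ ≤ ‖u j‖ + ‖(A *ᵥ u) j‖ := norm_sub_le _ _
      _ ≤ ‖u j‖ + ‖A *ᵥ u‖ := by gcongr; exact norm_le_pi_norm _ j
      _ ≤ ‖u j‖ + ‖A‖ * ‖u‖ := by gcongr; exact linfty_opNorm_mulVec A u
  linarith

theorem div_le_norm_apply_of_sub_mulVec_eq (hA : ‖A‖ < 1) (hw : ∀ j, ‖w j‖ = 1)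
    (h : u - A *ᵥ u = w) (j : n) : (1 - 2 * ‖A‖) / (1 - ‖A‖) ≤ ‖u j‖ := by
  have hw_norm : ‖w‖ ≤ 1 := (pi_norm_le_iff_of_nonneg zero_le_one).2 fun j => (hw j).le
  have hu : ‖u‖ * (1 - ‖A‖) ≤ 1 := by
    have := norm_le_div_of_sub_mulVec_eq hA h
    rw [le_div_iff₀ (sub_pos.2 hA)] at this
    linarith
  have huj := norm_apply_sub_mul_le_of_sub_mulVec_eq h j
  rw [hw j] at huj
  rw [div_le_iff₀ (sub_pos.2 hA)]
  nlinarith [mul_le_mul_of_nonneg_right huj (sub_pos.2 hA).le,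
    mul_le_mul_of_nonneg_left hu (norm_nonneg A)]

end FixedPoint

end Matrix

theorem stmt_3_general (m : ℕ) (ω : ℝ)
    (G : Matrix (Fin m) (Fin m) ℂ) (v : Fin m → ℂ) (Ui : Fin m → ℂ)
    (hUi : ∀ j, ‖Ui j‖ = 1)
    (h : ω ^ 2 * rowSumNorm (G * Matrix.diagonal v) < 1 / 2)
    (U : Fin m → ℂ)
    (hU : U = ((1 - (ω ^ 2 : ℂ) • (G * Matrix.diagonal v))⁻¹).mulVec Ui) :
    IsUnit (1 - (ω ^ 2 : ℂ) • (G * Matrix.diagonal v)) ∧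
    (∀ j, (1 - 2 * (ω ^ 2 * rowSumNorm (G * Matrix.diagonal v))) /
        (1 - ω ^ 2 * rowSumNorm (G * Matrix.diagonal v)) ≤ ‖U j‖) ∧
    supNorm (fun j => (U j)⁻¹) ≤
      (1 - ω ^ 2 * rowSumNorm (G * Matrix.diagonal v)) /
        (1 - 2 * (ω ^ 2 * rowSumNorm (G * Matrix.diagonal v))) := by
  set A : Matrix (Fin m) (Fin m) ℂ := (ω ^ 2 : ℂ) • (G * diagonal v)
  have hA : ‖A‖ = ω ^ 2 * rowSumNorm (G * diagonal v) := by
    rw [rowSumNorm_eq_linfty_opNorm, norm_smul, norm_pow, Complex.norm_real, Real.norm_eq_abs,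
      sq_abs]
  rw [← hA] at h ⊢
  have hA1 : ‖A‖ < 1 := by linarith
  have hunit : IsUnit (1 - A) := isUnit_one_sub_of_norm_lt_one hA1
  have hsol : U - A *ᵥ U = Ui :=
    calc U - A *ᵥ U = (1 - A) *ᵥ U := by rw [sub_mulVec, one_mulVec]
      _ = Ui := by
        rw [hU, mulVec_mulVec, mul_nonsing_inv _ ((isUnit_iff_isUnit_det _).1 hunit), one_mulVec]
  have hlower := div_le_norm_apply_of_sub_mulVec_eq hA1 hUi hsol
  refine ⟨hunit, hlower, ?_⟩
  rw [← inv_div]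
  exact supNorm_inv_le (div_pos (by linarith) (by linarith)) hlower

/-- If `ω²‖GV‖ < 1/2` and `Uⁱ` has unit-modulus entries, then
`I − ω²GV` is invertible and every component of `U = (I − ω²GV)⁻¹Uⁱ` has modulus
at least `b₀ = (1 − 2ω²‖GV‖)/(1 − ω²‖GV‖)`; equivalently
`‖U⁻¹‖_∞ ≤ (1 − ω²‖GV‖)/(1 − 2ω²‖GV‖)`. -/
theorem stmt_3 (m : ℕ) (hm : 1 ≤ m) (ω : ℝ) (hω : 0 < ω)
    (G : Matrix (Fin m) (Fin m) ℂ) (v : Fin m → ℂ) (Ui : Fin m → ℂ)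
    (hUi : ∀ j, ‖Ui j‖ = 1)
    (h : ω ^ 2 * rowSumNorm (G * Matrix.diagonal v) < 1 / 2)
    (U : Fin m → ℂ)
    (hU : U = ((1 - (ω ^ 2 : ℂ) • (G * Matrix.diagonal v))⁻¹).mulVec Ui) :
    IsUnit (1 - (ω ^ 2 : ℂ) • (G * Matrix.diagonal v)) ∧
    (∀ j, (1 - 2 * (ω ^ 2 * rowSumNorm (G * Matrix.diagonal v))) /
        (1 - ω ^ 2 * rowSumNorm (G * Matrix.diagonal v)) ≤ ‖U j‖) ∧
    supNorm (fun j => (U j)⁻¹) ≤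
      (1 - ω ^ 2 * rowSumNorm (G * Matrix.diagonal v)) /
        (1 - 2 * (ω ^ 2 * rowSumNorm (G * Matrix.diagonal v))) :=
  stmt_3_general m ω G v Ui hUi h U hU
end

section
/- Let ω > 0, ε > 0, and set c := 3 + √(3/2). Let G be an m×m complex matrix, V = diag(ν₁,…,ν_m) an m×m diagonal complex matrix not identically zero, and U^i ∈ ℂ^m a vector each of whose components has modulus 1. Assume ω²‖GV‖ < 1/2 and set b₀ := (1 − 2ω²‖GV‖)/(1 − ω²‖GV‖) and X := V(I − ω²GV)⁻¹U^i. Then every j with ν_j ≠ 0 satisfies |X_j| ≥ b₀/‖V⁻¹‖, where ‖V⁻¹‖ := max{|ν_j|⁻¹ : ν_j ≠ 0}. Consequently, if X̂ ∈ ℂ^m is any vector with ‖X̂ − X‖_∞ ≤ cε and {j : X̂_j ≠ 0} ⊆ {j : X_j ≠ 0}, and if b₀ > cε‖V⁻¹‖, then {j : X̂_j ≠ 0} = {j : X_j ≠ 0}. -/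
/-- `‖V⁻¹‖ = max {|νⱼ|⁻¹ : νⱼ ≠ 0}` for `V = diag(ν₁,…,ν_m)`. -/
noncomputable def diagInvNorm {m : ℕ} (v : Fin m → ℂ) : ℝ :=
  sSup ((fun j => ‖v j‖⁻¹) '' {j | v j ≠ 0})

theorem norm_le_div_one_sub_of_norm_sub_le {E : Type*} [SeminormedAddCommGroup E] {y u : E}
    {a : ℝ} (ha : a < 1) (h : ‖y - u‖ ≤ a * ‖y‖) : ‖y‖ ≤ ‖u‖ / (1 - a) := by
  rw [le_div_iff₀ (sub_pos.2 ha)]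
  linarith [norm_le_norm_add_norm_sub' y u]

theorem support_eq_of_forall_norm_sub_le {ι E : Type*} [SeminormedAddCommGroup E]
    {x y : ι → E} {δ : ℝ} (hx : ∀ j, y j ≠ 0 → δ < ‖y j‖) (hxy : ∀ j, ‖x j - y j‖ ≤ δ)
    (hsub : {j | x j ≠ 0} ⊆ {j | y j ≠ 0}) : {j | x j ≠ 0} = {j | y j ≠ 0} := by
  refine hsub.antisymm fun j hyj hxj => ?_
  have := hxy j
  rw [hxj, zero_sub, norm_neg] at this
  exact (hx j hyj).not_ge this

namespace Matrix

attribute [local instance] Matrix.linftyOpNormedAddCommGroup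

variable {𝕜 n : Type*} [NormedField 𝕜] [Fintype n] [DecidableEq n] {T : Matrix n n 𝕜}

theorem isUnit_one_sub_of_linfty_opNorm_lt_one (hT : ‖T‖ < 1) : IsUnit (1 - T) := by
  refine mulVec_injective_iff_isUnit.1 ((injective_iff_map_eq_zero' (1 - T).mulVecLin).2 ?_)
  intro y
  refine ⟨fun hy => ?_, fun hy => by simp [hy]⟩
  have hTy : y = T *ᵥ y := by simpa [sub_mulVec, sub_eq_zero] using hy
  have := norm_le_div_one_sub_of_norm_sub_le (u := (0 : n → 𝕜)) hT
    (by simpa [← hTy] using linfty_opNorm_mulVec T y)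
  simpa using this

theorem sub_mulVec_inv_one_sub_mulVec (hT : ‖T‖ < 1) (u : n → 𝕜) :
    (1 - T)⁻¹ *ᵥ u - T *ᵥ ((1 - T)⁻¹ *ᵥ u) = u := by
  have hdet := (isUnit_iff_isUnit_det _).1 (isUnit_one_sub_of_linfty_opNorm_lt_one hT)
  calc _ = (1 - T) *ᵥ ((1 - T)⁻¹ *ᵥ u) := by rw [sub_mulVec, one_mulVec]
    _ = u := by rw [mulVec_mulVec, mul_nonsing_inv _ hdet, one_mulVec]

theorem sub_div_one_sub_le_norm_inv_one_sub_mulVec_apply (hT : ‖T‖ < 1) (u : n → 𝕜) (j : n) :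
    ‖u j‖ - ‖T‖ * ‖u‖ / (1 - ‖T‖) ≤ ‖((1 - T)⁻¹ *ᵥ u) j‖ := by
  set y := (1 - T)⁻¹ *ᵥ u
  have hyu : y - u = T *ᵥ y := by
    rw [← sub_mulVec_inv_one_sub_mulVec hT u]; abel
  have hy : ‖y - u‖ ≤ ‖T‖ * ‖y‖ := hyu ▸ linfty_opNorm_mulVec T y
  have hy' : ‖T‖ * ‖y‖ ≤ ‖T‖ * (‖u‖ / (1 - ‖T‖)) :=
    mul_le_mul_of_nonneg_left (norm_le_div_one_sub_of_norm_sub_le hT hy) (norm_nonneg T)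
  calc ‖u j‖ - ‖T‖ * ‖u‖ / (1 - ‖T‖) ≤ ‖u j‖ - ‖(y - u) j‖ := by
        rw [mul_div_assoc]; linarith [norm_le_pi_norm (y - u) j]
    _ ≤ ‖y j‖ := by
        rw [Pi.sub_apply]; linarith [norm_sub_norm_le (u j) (y j), norm_sub_rev (y j) (u j)]

end Matrix

section

attribute [local instance] Matrix.linftyOpNormedAddCommGroup Matrix.linftyOpNormSMulClass

variable {m : ℕ}

theorem rowSumNorm_eq_norm (M : Matrix (Fin m) (Fin m) ℂ) : rowSumNorm M = ‖M‖ := by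
  rw [Matrix.linfty_opNorm_def, Finset.sup_univ_eq_ciSup, NNReal.coe_iSup]
  simp [rowSumNorm]

theorem rowSumNorm_smul (a : ℂ) (M : Matrix (Fin m) (Fin m) ℂ) :
    rowSumNorm (a • M) = ‖a‖ * rowSumNorm M := by
  rw [rowSumNorm_eq_norm, rowSumNorm_eq_norm, norm_smul]

theorem one_sub_rowSumNorm_div_le_norm_inv_one_sub_mulVec_apply {M : Matrix (Fin m) (Fin m) ℂ}
    (hM : rowSumNorm M < 1) {u : Fin m → ℂ} (hu : ∀ j, ‖u j‖ = 1) (j : Fin m) :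
    1 - rowSumNorm M / (1 - rowSumNorm M) ≤ ‖(1 - M)⁻¹.mulVec u j‖ := by
  rw [rowSumNorm_eq_norm] at hM ⊢
  have hu' : ‖u‖ ≤ 1 := (pi_norm_le_iff_of_nonneg zero_le_one).2 fun j => (hu j).le
  have hMu : ‖M‖ * ‖u‖ ≤ ‖M‖ := mul_le_of_le_one_right (norm_nonneg M) hu'
  have := Matrix.sub_div_one_sub_le_norm_inv_one_sub_mulVec_apply hM u j
  rw [hu j] at this
  linarith [div_le_div_of_nonneg_right hMu (sub_pos.2 hM).le]

end

theorem supNorm_eq_norm {m : ℕ} (W : Fin m → ℂ) : supNorm W = ‖W‖ := by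
  rw [Pi.norm_def, Finset.sup_univ_eq_ciSup, NNReal.coe_iSup]
  simp [supNorm]

theorem inv_norm_le_diagInvNorm {m : ℕ} {v : Fin m → ℂ} {j : Fin m} (hj : v j ≠ 0) :
    ‖v j‖⁻¹ ≤ diagInvNorm v :=
  le_csSup ((Set.toFinite _).image _).bddAbove ⟨j, hj, rfl⟩

theorem diagInvNorm_pos {m : ℕ} {v : Fin m → ℂ} {j : Fin m} (hj : v j ≠ 0) :
    0 < diagInvNorm v :=
  (inv_pos.2 (norm_pos_iff.2 hj)).trans_le (inv_norm_le_diagInvNorm hj)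

theorem div_diagInvNorm_le_mul {m : ℕ} {v : Fin m → ℂ} {j : Fin m} (hj : v j ≠ 0) {b : ℝ}
    (hb : 0 ≤ b) : b / diagInvNorm v ≤ ‖v j‖ * b :=
  calc b / diagInvNorm v ≤ b / ‖v j‖⁻¹ :=
        div_le_div_of_nonneg_left hb (inv_pos.2 (norm_pos_iff.2 hj)) (inv_norm_le_diagInvNorm hj)
    _ = ‖v j‖ * b := by rw [div_inv_eq_mul, mul_comm]

theorem stmt_6_general (m : ℕ) (ω ε : ℝ)
    (c : ℝ)
    (G : Matrix (Fin m) (Fin m) ℂ) (v : Fin m → ℂ)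
    (Ui : Fin m → ℂ) (hUi : ∀ j, ‖Ui j‖ = 1)
    (h : ω ^ 2 * rowSumNorm (G * Matrix.diagonal v) < 1 / 2)
    (b₀ : ℝ)
    (hb₀ : b₀ = (1 - 2 * (ω ^ 2 * rowSumNorm (G * Matrix.diagonal v))) /
      (1 - ω ^ 2 * rowSumNorm (G * Matrix.diagonal v)))
    (X : Fin m → ℂ)
    (hX : X = (Matrix.diagonal v).mulVec
      (((1 - (ω ^ 2 : ℂ) • (G * Matrix.diagonal v))⁻¹).mulVec Ui)) :
    (∀ j, v j ≠ 0 → b₀ / diagInvNorm v ≤ ‖X j‖) ∧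
    ∀ Xh : Fin m → ℂ, supNorm (Xh - X) ≤ c * ε →
      {j | Xh j ≠ 0} ⊆ {j | X j ≠ 0} → b₀ > c * ε * diagInvNorm v →
      {j | Xh j ≠ 0} = {j | X j ≠ 0} := by
  set a := ω ^ 2 * rowSumNorm (G * Matrix.diagonal v)
  have hTa : rowSumNorm ((ω ^ 2 : ℂ) • (G * Matrix.diagonal v)) = a := by
    rw [rowSumNorm_smul, norm_pow, Complex.norm_real, Real.norm_eq_abs, sq_abs]
  have hb₀_nonneg : 0 ≤ b₀ := hb₀ ▸ div_nonneg (by linarith) (by linarith)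
  have hb₀_eq : b₀ = 1 - a / (1 - a) := by
    rw [hb₀]
    field_simp [(by linarith : 1 - a ≠ 0)]
    ring
  have hY : ∀ j, b₀ ≤ ‖(1 - (ω ^ 2 : ℂ) • (G * Matrix.diagonal v))⁻¹.mulVec Ui j‖ := fun j => by
    have hT : rowSumNorm ((ω ^ 2 : ℂ) • (G * Matrix.diagonal v)) < 1 := by rw [hTa]; linarith
    simpa only [hTa, ← hb₀_eq] using
      one_sub_rowSumNorm_div_le_norm_inv_one_sub_mulVec_apply hT hUi j
  have hXj : ∀ j, X j = v j * (1 - (ω ^ 2 : ℂ) • (G * Matrix.diagonal v))⁻¹.mulVec Ui j :=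
    fun j => by rw [hX, Matrix.mulVec_diagonal]
  have hlow : ∀ j, v j ≠ 0 → b₀ / diagInvNorm v ≤ ‖X j‖ := fun j hj => by
    rw [hXj, norm_mul]
    exact (div_diagInvNorm_le_mul hj hb₀_nonneg).trans (by gcongr; exact hY j)
  refine ⟨hlow, fun Xh hclose hsub hb => support_eq_of_forall_norm_sub_le (δ := c * ε) ?_ ?_ hsub⟩
  · intro j hj
    have hvj : v j ≠ 0 := fun hv => hj (by rw [hXj, hv, zero_mul])
    exact ((lt_div_iff₀ (diagInvNorm_pos hvj)).2 hb).trans_le (hlow j hvj)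
  · exact fun j => (norm_le_pi_norm (Xh - X) j).trans (supNorm_eq_norm (Xh - X) ▸ hclose)

/-- With `ω²‖GV‖ < 1/2`, `b₀ = (1−2ω²‖GV‖)/(1−ω²‖GV‖)` and
`X = V(I−ω²GV)⁻¹Uⁱ`: every `j` in the support of `ν` satisfies `|Xⱼ| ≥ b₀/‖V⁻¹‖`;
consequently, any `X̂` with `‖X̂ − X‖_∞ ≤ (3+√(3/2))ε` and `supp X̂ ⊆ supp X`
satisfies `supp X̂ = supp X` provided `b₀ > (3+√(3/2))ε‖V⁻¹‖`. -/
theorem stmt_6 (m : ℕ) (hm : 1 ≤ m) (ω ε : ℝ) (hω : 0 < ω) (hε : 0 < ε)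
    (c : ℝ) (hc : c = 3 + Real.sqrt (3 / 2))
    (G : Matrix (Fin m) (Fin m) ℂ) (v : Fin m → ℂ) (hv : ∃ j, v j ≠ 0)
    (Ui : Fin m → ℂ) (hUi : ∀ j, ‖Ui j‖ = 1)
    (h : ω ^ 2 * rowSumNorm (G * Matrix.diagonal v) < 1 / 2)
    (b₀ : ℝ)
    (hb₀ : b₀ = (1 - 2 * (ω ^ 2 * rowSumNorm (G * Matrix.diagonal v))) /
      (1 - ω ^ 2 * rowSumNorm (G * Matrix.diagonal v)))
    (X : Fin m → ℂ)
    (hX : X = (Matrix.diagonal v).mulVec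
      (((1 - (ω ^ 2 : ℂ) • (G * Matrix.diagonal v))⁻¹).mulVec Ui)) :
    (∀ j, v j ≠ 0 → b₀ / diagInvNorm v ≤ ‖X j‖) ∧
    ∀ Xh : Fin m → ℂ, supNorm (Xh - X) ≤ c * ε →
      {j | Xh j ≠ 0} ⊆ {j | X j ≠ 0} → b₀ > c * ε * diagInvNorm v →
      {j | Xh j ≠ 0} = {j | X j ≠ 0} :=
  stmt_6_general m ω ε c G v Ui hUi h b₀ hb₀ X hX
end

section
/- Let N ≥ 2 and m ≥ 1, and let Φ be an N×m complex matrix all of whose entries have modulus 1. Suppose that for every pair of distinct row indices k ≠ k', (1/m)|Σ_{l=1}^m Φ_{kl} conj(Φ_{k'l})| < 1/(N−1). Then ‖(1/m)ΦΦ* − I_N‖₂ < 1, where ‖·‖₂ is the spectral norm; consequently, Φ has full rank N and ‖Φ‖₂² < 2m. -/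
/-- The spectral norm (largest singular value) of a rectangular complex matrix,
as the operator norm of the induced map between Euclidean spaces. -/
noncomputable def specNorm {a b : ℕ} (M : Matrix (Fin a) (Fin b) ℂ) : ℝ :=
  ‖LinearMap.toContinuousLinearMap (Matrix.toEuclideanLin M)‖

/-!
Put `A = (1/m)ΦΦ* - I`. Unit-modulus entries make the diagonal of `A` vanish, and the coherence
hypothesis makes every row sum `∑ⱼ |A k j|` less than `(N - 1) · 1/(N - 1) = 1`. By Gershgorin's
theorem every eigenvalue of `A` then has modulus `< 1`; since `A` is Hermitian, its spectral norm
is its spectral radius, so `‖A‖₂ < 1`. Hence `I + A = (1/m)ΦΦ*` is invertible, which gives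
`rank Φ = N`, and `‖Φ‖₂² = ‖ΦΦ*‖₂ = m ‖I + A‖₂ ≤ m (1 + ‖A‖₂) < 2m`.
-/

open scoped Matrix.Norms.L2Operator

namespace Matrix

theorem IsHermitian.l2_opNorm_lt_of_forall_sum_norm_lt {n : Type*} [Fintype n] [DecidableEq n]
    [Nonempty n] {A : Matrix n n ℂ} (hA : A.IsHermitian) {r : ℝ}
    (hr : ∀ k, ∑ j, ‖A k j‖ < r) : ‖A‖ < r := by
  suffices spectralRadius ℂ A < r.toNNReal by
    rwa [hA.isSelfAdjoint.spectralRadius_eq_nnnorm, ENNReal.coe_lt_coe,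
      Real.lt_toNNReal_iff_coe_lt, coe_nnnorm] at this
  refine spectrum.spectralRadius_lt_of_forall_lt A fun z hz => ?_
  rw [← spectrum_toLin', ← Module.End.hasEigenvalue_iff_mem_spectrum] at hz
  obtain ⟨k, hk⟩ := eigenvalue_mem_ball hz
  rw [Metric.mem_closedBall, dist_eq_norm] at hk
  rw [Real.lt_toNNReal_iff_coe_lt, coe_nnnorm]
  calc ‖z‖ ≤ ‖A k k‖ + ‖z - A k k‖ := norm_le_norm_add_norm_sub' z (A k k)
    _ ≤ ‖A k k‖ + ∑ j ∈ Finset.univ.erase k, ‖A k j‖ := by gcongr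
    _ = ∑ j, ‖A k j‖ := Finset.add_sum_erase _ (fun j => ‖A k j‖) (Finset.mem_univ k)
    _ < r := hr k

theorem sum_norm_lt_one_of_diag_eq_zero {n α : Type*} [Fintype n] [DecidableEq n]
    [SeminormedAddGroup α] {A : Matrix n n α} (hdiag : ∀ k, A k k = 0)
    (hoff : ∀ k j, k ≠ j → ‖A k j‖ < 1 / ((Fintype.card n : ℝ) - 1)) (k : n) :
    ∑ j, ‖A k j‖ < 1 := by
  rw [← Finset.add_sum_erase _ (fun j => ‖A k j‖) (Finset.mem_univ k), hdiag, norm_zero,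
    zero_add]
  rcases (Finset.univ.erase k).eq_empty_or_nonempty with hempty | hne
  · simp [hempty]
  have hcard : ((Finset.univ.erase k).card : ℝ) = (Fintype.card n : ℝ) - 1 := by
    rw [Finset.card_erase_of_mem (Finset.mem_univ k), Finset.card_univ,
      Nat.cast_pred (Fintype.card_pos_iff.mpr ⟨k⟩)]
  calc ∑ j ∈ Finset.univ.erase k, ‖A k j‖
      < ∑ _j ∈ Finset.univ.erase k, 1 / ((Fintype.card n : ℝ) - 1) :=
        Finset.sum_lt_sum_of_nonempty hne fun j hj => hoff k j (Finset.ne_of_mem_erase hj).symm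
    _ = 1 := by
        rw [Finset.sum_const, nsmul_eq_mul, hcard, mul_one_div_cancel]
        rw [← hcard]
        exact_mod_cast hne.card_pos.ne'

theorem mul_conjTranspose_apply_self_of_forall_norm_eq_one {n m : Type*} [Fintype m]
    {Φ : Matrix n m ℂ} (hΦ : ∀ k l, ‖Φ k l‖ = 1) (k : n) :
    (Φ * Φᴴ) k k = Fintype.card m := by
  simp [mul_apply, Complex.mul_conj, Complex.normSq_eq_norm_sq, hΦ]

theorem l2_opNorm_self_mul_conjTranspose {n m : Type*} [Fintype n] [DecidableEq n] [Fintype m]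
    [DecidableEq m] (Φ : Matrix n m ℂ) : ‖Φ * Φᴴ‖ = ‖Φ‖ * ‖Φ‖ := by
  rw [← l2_opNorm_conjTranspose Φ, ← l2_opNorm_conjTranspose_mul_self,
    conjTranspose_conjTranspose]

open scoped ComplexOrder in
theorem rank_eq_card_of_isUnit_mul_conjTranspose {n m : Type*} [Fintype n] [DecidableEq n]
    [Fintype m] {Φ : Matrix n m ℂ} (h : IsUnit (Φ * Φᴴ)) : Φ.rank = Fintype.card n := by
  rw [← rank_self_mul_conjTranspose, rank_of_isUnit _ h]

end Matrix

open Matrix in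
/-- deterministic core of the paper's spectral-norm bound,
Theorem 2.3.  If `Φ` is `N×m` with unit-modulus entries (`N ≥ 2`, `m ≥ 1`) and
`(1/m)|Σ_l Φ_{kl} conj(Φ_{k'l})| < 1/(N−1)` for all distinct rows `k ≠ k'`, then
`‖(1/m)ΦΦ* − I‖₂ < 1`; consequently `Φ` has full rank `N` and `‖Φ‖₂² < 2m`. -/
theorem stmt_10 (N m : ℕ) (hN : 2 ≤ N) (hm : 1 ≤ m)
    (Φ : Matrix (Fin N) (Fin m) ℂ) (hΦ : ∀ k l, ‖Φ k l‖ = 1)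
    (hrows : ∀ k k' : Fin N, k ≠ k' →
      ‖∑ l, Φ k l * (starRingEnd ℂ) (Φ k' l)‖ / m < 1 / ((N : ℝ) - 1)) :
    specNorm (((m : ℂ))⁻¹ • (Φ * Φ.conjTranspose) - 1) < 1 ∧
    Φ.rank = N ∧
    specNorm Φ ^ 2 < 2 * m := by
  have hm0 : (m : ℂ) ≠ 0 := by exact_mod_cast (by omega : m ≠ 0)
  have : Nonempty (Fin N) := ⟨⟨0, by omega⟩⟩
  set A := (m : ℂ)⁻¹ • (Φ * Φᴴ) - 1
  have hA_herm : A.IsHermitian :=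
    ((isHermitian_mul_conjTranspose_self Φ).smul (by simp)).sub isHermitian_one
  have hdiag : ∀ k, A k k = 0 := fun k => by
    simp [A, mul_conjTranspose_apply_self_of_forall_norm_eq_one hΦ, hm0]
  have hoff : ∀ k j, k ≠ j → ‖A k j‖ < 1 / ((Fintype.card (Fin N) : ℝ) - 1) := fun k j hkj => by
    simpa [A, one_apply_ne hkj, mul_apply, div_eq_inv_mul] using hrows k j hkj
  have hA_norm : ‖A‖ < 1 :=
    hA_herm.l2_opNorm_lt_of_forall_sum_norm_lt (sum_norm_lt_one_of_diag_eq_zero hdiag hoff)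
  have hgram : Φ * Φᴴ = (m : ℂ) • (1 + A) := by simp [A, smul_smul, hm0]
  have hgram_unit : IsUnit (Φ * Φᴴ) := by
    rw [hgram, ← Units.val_mk0 hm0, ← Units.smul_def, isUnit_smul_iff, ← sub_neg_eq_add]
    exact isUnit_one_sub_of_norm_lt_one (by rwa [norm_neg])
  refine ⟨hA_norm, ?_, ?_⟩
  · rw [rank_eq_card_of_isUnit_mul_conjTranspose hgram_unit, Fintype.card_fin]
  · calc specNorm Φ ^ 2 = ‖Φ * Φᴴ‖ := by rw [l2_opNorm_self_mul_conjTranspose, sq]; rfl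
      _ = m * ‖1 + A‖ := by rw [hgram, norm_smul, Complex.norm_natCast]
      _ ≤ m * (1 + ‖A‖) := by grw [norm_add_le, CStarRing.norm_one]
      _ < 2 * m := by nlinarith [(by exact_mod_cast hm : (1 : ℝ) ≤ m)]
end

section
/- There exists a constant c > 0 such that for every continuously differentiable 2π-periodic function f: ℝ → ℂ, every θ₀ ∈ ℝ, and every λ ≥ 0, |∫_{−π/2}^{π/2} f(θ + θ₀) cos θ · e^{iλ sin θ} dθ| ≤ c (1 + λ)^{−1} (‖f‖_∞ + ‖f'‖_∞). -/
/-!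
For `λ ≤ 1` the trivial bound `π ‖f‖_∞` suffices. For `λ > 0`, the factor `cos θ e^{iλ sin θ}` is
the derivative of `e^{iλ sin θ} / (iλ)`, so one integration by parts moves the derivative onto
`f` and gains a factor `λ⁻¹`: the boundary terms contribute `2 ‖f‖_∞ / λ` and the remaining
integral `π ‖f'‖_∞ / λ`. The two bounds combine into `(2π + 4)(1 + λ)⁻¹ (‖f‖_∞ + ‖f'‖_∞)`.
Periodicity is what makes `f` and `f'` bounded, so that the suprema `⨆ x, ‖f x‖` are true bounds
rather than the junk value `0`.
-/

open Function Complex intervalIntegral MeasureTheory Set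

theorem Function.Periodic.deriv {𝕜 E : Type*} [NontriviallyNormedField 𝕜]
    [NormedAddCommGroup E] [NormedSpace 𝕜 E] {f : 𝕜 → E} {c : 𝕜} (hf : Periodic f c) :
    Periodic (deriv f) c := fun x => by
  rw [← deriv_comp_add_const f c x, show (fun y => f (y + c)) = f from funext hf]

theorem Function.Periodic.norm_le_iSup_norm {E : Type*} [SeminormedAddCommGroup E]
    {f : ℝ → E} {c : ℝ} (hp : Periodic f c) (hc : c ≠ 0) (hf : Continuous f) (x : ℝ) :
    ‖f x‖ ≤ ⨆ y, ‖f y‖ := by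
  obtain ⟨C, hC⟩ := isBounded_iff_forall_norm_le.1 (hp.isBounded_of_continuous hc hf)
  exact le_ciSup ⟨C, by rintro _ ⟨y, rfl⟩; exact hC _ (mem_range_self y)⟩ x

theorem Complex.norm_exp_I_mul_ofReal_mul_ofReal (a b : ℝ) : ‖exp (I * a * b)‖ = 1 := by
  rw [mul_assoc, ← ofReal_mul, norm_exp_I_mul_ofReal]

theorem norm_integral_mul_mul_exp_le {u : ℝ → ℂ} {φ φ' : ℝ → ℝ} {a b lam M : ℝ}
    (hM : ∀ x ∈ uIcc a b, ‖u x‖ ≤ M) (hφ' : ∀ x ∈ uIcc a b, |φ' x| ≤ 1) :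
    ‖∫ x in a..b, u x * φ' x * exp (I * lam * φ x)‖ ≤ M * |b - a| := by
  refine norm_integral_le_of_norm_le_const fun x hx => ?_
  have hx := uIoc_subset_uIcc hx
  rw [norm_mul, norm_exp_I_mul_ofReal_mul_ofReal, mul_one, norm_mul, norm_real, Real.norm_eq_abs]
  exact (mul_le_of_le_one_right (norm_nonneg _) (hφ' x hx)).trans (hM x hx)

theorem norm_integral_mul_deriv_mul_exp_le {u u' : ℝ → ℂ} {φ φ' : ℝ → ℝ} {a b lam M M' : ℝ}
    (hu : ∀ x ∈ uIcc a b, HasDerivAt u (u' x) x) (hu' : IntervalIntegrable u' volume a b)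
    (hφ : ∀ x ∈ uIcc a b, HasDerivAt φ (φ' x) x) (hφ' : ContinuousOn φ' (uIcc a b))
    (hM : ∀ x ∈ uIcc a b, ‖u x‖ ≤ M) (hM' : ∀ x ∈ uIcc a b, ‖u' x‖ ≤ M') (hlam : 0 < lam) :
    ‖∫ x in a..b, u x * φ' x * exp (I * lam * φ x)‖ ≤ (2 * M + M' * |b - a|) / lam := by
  have hlam' : (lam : ℂ) ≠ 0 := ofReal_ne_zero.2 hlam.ne'
  set v : ℝ → ℂ := fun x => (I * lam)⁻¹ * exp (I * lam * φ x)
  have hv : ∀ x ∈ uIcc a b, HasDerivAt v (φ' x * exp (I * lam * φ x)) x := fun x hx => by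
    refine ((((hφ x hx).ofReal_comp.const_mul (I * lam)).cexp).const_mul (I * (lam : ℂ))⁻¹
      ).congr_deriv ?_
    field_simp
  have hv' : IntervalIntegrable (fun x => (φ' x : ℂ) * exp (I * lam * φ x)) volume a b := by
    refine ContinuousOn.intervalIntegrable ?_
    refine (continuous_ofReal.comp_continuousOn hφ').mul (continuous_exp.comp_continuousOn ?_)
    exact continuousOn_const.mul (continuous_ofReal.comp_continuousOn
      fun x hx => (hφ x hx).continuousAt.continuousWithinAt)
  have hnorm_v : ∀ x, ‖v x‖ = lam⁻¹ := fun x => by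
    simp [v, norm_exp_I_mul_ofReal_mul_ofReal, abs_of_pos hlam]
  have hboundary : ∀ x ∈ uIcc a b, ‖u x * v x‖ ≤ M / lam := fun x hx => by
    rw [norm_mul, hnorm_v, div_eq_mul_inv]
    exact mul_le_mul_of_nonneg_right (hM x hx) (by positivity)
  have hremainder : ‖∫ x in a..b, u' x * v x‖ ≤ M' * |b - a| / lam := by
    rw [div_eq_mul_inv, mul_right_comm]
    refine norm_integral_le_of_norm_le_const fun x hx => ?_
    rw [norm_mul, hnorm_v]
    exact mul_le_mul_of_nonneg_right (hM' x (uIoc_subset_uIcc hx)) (by positivity)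
  simp_rw [mul_assoc (u _), integral_mul_deriv_eq_deriv_mul hu hv hu' hv']
  calc _ ≤ ‖u b * v b‖ + ‖u a * v a‖ + ‖∫ x in a..b, u' x * v x‖ :=
        (norm_sub_le _ _).trans (by gcongr; exact norm_sub_le _ _)
    _ ≤ M / lam + M / lam + M' * |b - a| / lam := by
      gcongr
      exacts [hboundary b right_mem_uIcc, hboundary a left_mem_uIcc]
    _ = (2 * M + M' * |b - a|) / lam := by ring

theorem le_mul_inv_one_add_of_le_of_le_div {X A B lam : ℝ} (hA : 0 ≤ A) (hB : 0 ≤ B)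
    (hlam : 0 ≤ lam) (hXA : X ≤ A) (hXB : 0 < lam → X ≤ B / lam) :
    X ≤ 2 * (1 + lam)⁻¹ * (A + B) := by
  rw [mul_comm 2, mul_assoc, ← div_eq_inv_mul, le_div_iff₀ (by positivity)]
  rcases le_or_gt lam 1 with hlam1 | hlam1
  · nlinarith
  · have := hXB (by linarith)
    rw [le_div_iff₀ (by linarith)] at this
    nlinarith

/-- integration-by-parts estimate for the 3D coherence bound.
There is `c > 0` such that for every `C¹` `2π`-periodic `f : ℝ → ℂ`, every `θ₀ ∈ ℝ`
and every `λ ≥ 0`,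
`|∫_{−π/2}^{π/2} f(θ+θ₀) cos θ e^{iλ sin θ} dθ| ≤ c(1+λ)⁻¹(‖f‖_∞ + ‖f'‖_∞)`. -/
theorem stmt_15 :
    ∃ c : ℝ, 0 < c ∧
      ∀ f : ℝ → ℂ, ContDiff ℝ 1 f → Function.Periodic f (2 * Real.pi) →
        ∀ θ₀ lam : ℝ, 0 ≤ lam →
          norm (∫ θ in (-(Real.pi / 2))..(Real.pi / 2),
              f (θ + θ₀) * ((Real.cos θ : ℝ) : ℂ) *
                Complex.exp (Complex.I * (lam : ℂ) * ((Real.sin θ : ℝ) : ℂ))) ≤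
            c * (1 + lam)⁻¹ *
              ((⨆ x, norm (f x)) + ⨆ x, norm (deriv f x)) := by
  refine ⟨2 * Real.pi + 4, by positivity, fun f hf hper θ₀ lam hlam => ?_⟩
  have h2π : 2 * Real.pi ≠ 0 := by positivity
  set M := ⨆ x, ‖f x‖
  set M' := ⨆ x, ‖deriv f x‖
  have hM x : ‖f x‖ ≤ M := hper.norm_le_iSup_norm h2π hf.continuous x
  have hM' x : ‖deriv f x‖ ≤ M' :=
    hper.deriv.norm_le_iSup_norm h2π (hf.continuous_deriv le_rfl) x
  have hlen : |Real.pi / 2 - -(Real.pi / 2)| = Real.pi := by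
    rw [sub_neg_eq_add, add_halves, abs_of_pos Real.pi_pos]
  have htrivial := hlen ▸ norm_integral_mul_mul_exp_le (a := -(Real.pi / 2)) (b := Real.pi / 2)
    (φ := Real.sin) (lam := lam) (fun θ _ => hM (θ + θ₀)) (fun θ _ => Real.abs_cos_le_one θ)
  have hoscillatory (hpos : 0 < lam) := hlen ▸ norm_integral_mul_deriv_mul_exp_le
    (fun θ _ => ((hf.differentiable one_ne_zero _).hasDerivAt).comp_add_const θ θ₀)
    (((hf.continuous_deriv le_rfl).comp (continuous_add_const θ₀)).intervalIntegrable _ _)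
    (fun θ _ => Real.hasDerivAt_sin θ) Real.continuous_cos.continuousOn
    (fun θ _ => hM _) (fun θ _ => hM' _) hpos
  have hM0 : 0 ≤ M := (norm_nonneg _).trans (hM 0)
  have hM'0 : 0 ≤ M' := (norm_nonneg _).trans (hM' 0)
  refine (le_mul_inv_one_add_of_le_of_le_div (by positivity) (by positivity) hlam htrivial
    hoscillatory).trans ?_
  rw [mul_right_comm 2, mul_right_comm (2 * Real.pi + 4)]
  refine mul_le_mul_of_nonneg_right ?_ (by positivity)
  nlinarith [Real.pi_pos]
end

section
/- Let ω > 0, d ∈ {2,3}, let r₁,…,r_s ∈ ℝ^d, let ν₁,…,ν_s ∈ ℂ, let V = diag(ν₁,…,ν_s), and let G be a symmetric s×s complex matrix (G_{jk} = G_{kj}) with zero diagonal. Assume I − ω²GV is invertible. For a unit vector e ∈ ℝ^d define the vector E(e) ∈ ℂ^s by E(e)_j := exp(iω e·r_j), the exciting field u(e) := (I − ω²GV)⁻¹E(e), and the scattering amplitude A(r̂, d̂) := (ω²/(4π)) Σ_{j=1}^s ν_j u(d̂)_j exp(−iω r̂·r_j) for unit vectors r̂ (sampling direction) and d̂ (incidence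 direction). Then A(r̂, d̂) = A(−d̂, −r̂) for all unit vectors r̂ and d̂. -/
/-!
Write `S := V (I − ω²GV)⁻¹`. Since `G` and `V` are symmetric, `(I − ω²GV)ᵀ V = V (I − ω²GV)`,
so `S` is symmetric. The amplitude is the bilinear form `A(r̂, d̂) = (ω²/4π) E(−r̂) · S E(d̂)`,
and symmetry of `S` swaps its two arguments: `E(−r̂) · S E(d̂) = E(d̂) · S E(−r̂)`, which is the
form defining `A(−d̂, −r̂)`.
-/

open Matrix

namespace Matrix

variable {n : Type*} [Fintype n]

theorem IsSymm.dotProduct_mulVec_comm {R : Type*} [CommSemiring R] {S : Matrix n n R}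
    (hS : S.IsSymm) (v w : n → R) : v ⬝ᵥ S *ᵥ w = w ⬝ᵥ S *ᵥ v := by
  simpa only [hS.eq] using dotProduct_transpose_mulVec S v w

variable {R : Type*} [CommRing R] [DecidableEq n]

theorem isSymm_mul_nonsing_inv_of_transpose_mul_eq {D M : Matrix n n R} (hD : D.IsSymm)
    (hMD : Mᵀ * D = D * M) : (D * M⁻¹).IsSymm := by
  have hT : (D * M⁻¹)ᵀ = Mᵀ⁻¹ * D := by
    rw [transpose_mul, hD.eq, transpose_nonsing_inv]
  by_cases hM : IsUnit M.det
  · have hMT : IsUnit Mᵀ.det := by rwa [det_transpose]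
    calc (D * M⁻¹)ᵀ = Mᵀ⁻¹ * D * (M * M⁻¹) := by rw [hT, mul_nonsing_inv _ hM, Matrix.mul_one]
      _ = Mᵀ⁻¹ * Mᵀ * D * M⁻¹ := by simp only [Matrix.mul_assoc, hMD]
      _ = D * M⁻¹ := by rw [nonsing_inv_mul _ hMT, Matrix.one_mul]
  -- For singular `M` both inverses are the junk value `0`.
  · have hMT : ¬IsUnit Mᵀ.det := by rwa [det_transpose]
    rw [IsSymm, hT, nonsing_inv_apply_not_isUnit _ hM, nonsing_inv_apply_not_isUnit _ hMT,
      Matrix.zero_mul, Matrix.mul_zero]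

theorem transpose_one_sub_smul_mul_mul_eq {G V : Matrix n n R} (hG : G.IsSymm) (hV : V.IsSymm)
    (c : R) : (1 - c • (G * V))ᵀ * V = V * (1 - c • (G * V)) := by
  rw [transpose_sub, transpose_one, transpose_smul, transpose_mul, hG.eq, hV.eq, Matrix.sub_mul,
    Matrix.mul_sub, Matrix.one_mul, Matrix.mul_one, Matrix.smul_mul, Matrix.mul_smul,
    Matrix.mul_assoc]

theorem IsSymm.mul_nonsing_inv_one_sub_smul_mul {G V : Matrix n n R} (hG : G.IsSymm)
    (hV : V.IsSymm) (c : R) : (V * (1 - c • (G * V))⁻¹).IsSymm :=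
  isSymm_mul_nonsing_inv_of_transpose_mul_eq hV (transpose_one_sub_smul_mul_mul_eq hG hV c)

end Matrix

theorem stmt_17_general (s : ℕ) (d : ℕ) (ω : ℝ)
    (r : Fin s → EuclideanSpace ℝ (Fin d))
    (ν : Fin s → ℂ)
    (G : Matrix (Fin s) (Fin s) ℂ) (hGsymm : G.IsSymm)
    (Ef : EuclideanSpace ℝ (Fin d) → Fin s → ℂ)
    (hEf : ∀ e j, Ef e j = Complex.exp (Complex.I * (ω : ℂ) * ((inner ℝ e (r j) : ℝ) : ℂ)))
    (u : EuclideanSpace ℝ (Fin d) → Fin s → ℂ)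
    (hu : ∀ e, u e = ((1 - (ω ^ 2 : ℂ) • (G * Matrix.diagonal ν))⁻¹).mulVec (Ef e))
    (A : EuclideanSpace ℝ (Fin d) → EuclideanSpace ℝ (Fin d) → ℂ)
    (hA : ∀ rhat dhat, A rhat dhat = ((ω ^ 2 : ℂ) / (4 * Real.pi)) *
      ∑ j, ν j * u dhat j * Complex.exp (-(Complex.I * (ω : ℂ) * ((inner ℝ rhat (r j) : ℝ) : ℂ)))) :
    ∀ rhat dhat : EuclideanSpace ℝ (Fin d), ‖rhat‖ = 1 → ‖dhat‖ = 1 →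
      A rhat dhat = A (-dhat) (-rhat) := by
  intro rhat dhat _ _
  set S := diagonal ν * (1 - (ω ^ 2 : ℂ) • (G * diagonal ν))⁻¹
  have hS : S.IsSymm := hGsymm.mul_nonsing_inv_one_sub_smul_mul (isSymm_diagonal ν) _
  have hEf_neg : ∀ e j,
      Ef (-e) j = Complex.exp (-(Complex.I * (ω : ℂ) * ((inner ℝ e (r j) : ℝ) : ℂ))) := by
    intro e j
    rw [hEf, inner_neg_left, Complex.ofReal_neg, mul_neg]
  have hA_bilin : ∀ a b, A a b = ((ω ^ 2 : ℂ) / (4 * Real.pi)) * (Ef (-a) ⬝ᵥ S *ᵥ Ef b) := by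
    intro a b
    rw [hA, dotProduct, ← mulVec_mulVec, ← hu]
    congr 1
    exact Finset.sum_congr rfl fun j _ ↦ by rw [mulVec_diagonal, hEf_neg]; ring
  rw [hA_bilin, hA_bilin, neg_neg, hS.dotProduct_mulVec_comm]

/-- input–output reciprocity of point-scatterer scattering.
For a symmetric Green matrix `G` with zero diagonal, diagonal strength matrix `V`,
invertible `I − ω²GV`, plane-wave exciting fields `u(e) = (I−ω²GV)⁻¹E(e)` with
`E(e)ⱼ = e^{iω e·rⱼ}`, the scattering amplitude
`A(r̂,d̂) = (ω²/4π) Σⱼ νⱼ u(d̂)ⱼ e^{−iω r̂·rⱼ}` satisfies `A(r̂,d̂) = A(−d̂,−r̂)`. -/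
theorem stmt_17 (s : ℕ) (d : ℕ) (hd : d = 2 ∨ d = 3) (ω : ℝ) (hω : 0 < ω)
    (r : Fin s → EuclideanSpace ℝ (Fin d))
    (ν : Fin s → ℂ)
    (G : Matrix (Fin s) (Fin s) ℂ) (hGsymm : G.IsSymm) (hGdiag : ∀ j, G j j = 0)
    (hinv : IsUnit (1 - (ω ^ 2 : ℂ) • (G * Matrix.diagonal ν)))
    (Ef : EuclideanSpace ℝ (Fin d) → Fin s → ℂ)
    (hEf : ∀ e j, Ef e j = Complex.exp (Complex.I * (ω : ℂ) * ((inner ℝ e (r j) : ℝ) : ℂ)))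
    (u : EuclideanSpace ℝ (Fin d) → Fin s → ℂ)
    (hu : ∀ e, u e = ((1 - (ω ^ 2 : ℂ) • (G * Matrix.diagonal ν))⁻¹).mulVec (Ef e))
    (A : EuclideanSpace ℝ (Fin d) → EuclideanSpace ℝ (Fin d) → ℂ)
    (hA : ∀ rhat dhat, A rhat dhat = ((ω ^ 2 : ℂ) / (4 * Real.pi)) *
      ∑ j, ν j * u dhat j * Complex.exp (-(Complex.I * (ω : ℂ) * ((inner ℝ rhat (r j) : ℝ) : ℂ)))) :
    ∀ rhat dhat : EuclideanSpace ℝ (Fin d), ‖rhat‖ = 1 → ‖dhat‖ = 1 →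
      A rhat dhat = A (-dhat) (-rhat) :=
  stmt_17_general s d ω r ν G hGsymm Ef hEf u hu A hA
end
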